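/- arXiv:2210.04874 — 6 statements merged into one kernel-verified Lean document; each statement's English description precedes it below -/
import Mathlib

section
/- For probability distributions p, q on a finite alphabet X, equality 1 - F_c(p,q) = T_c(p,q) holds if and only if for every x in X, p(x) = q(x) or p(x) = 0 or q(x) = 0. -/
/-!
Since `|a - b| = a + b - 2 min(a, b)`, the total variation distance of two probability vectors
is `1 - ∑ₓ min(p x, q x)`. The equality `1 - F = T` therefore says `∑ₓ min(p x, q x) = ∑ₓ √(p x q x)`,
and as `min(a, b) ≤ √(ab)` termwise, with equality exactly when `a = b` or one of them vanishes,
it holds iff it holds at every point.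
-/

theorem abs_sub_eq_add_sub_two_mul_min {α : Type*} [Ring α] [LinearOrder α] [IsOrderedRing α]
    (a b : α) : |a - b| = a + b - 2 * min a b := by
  rw [← max_sub_min_eq_abs', ← min_add_max a b, two_mul]
  abel

theorem Finset.sum_abs_sub_eq_sum_add_sum_sub_two_mul_sum_min {ι α : Type*} [CommRing α]
    [LinearOrder α] [IsOrderedRing α] (s : Finset ι) (f g : ι → α) :
    ∑ i ∈ s, |f i - g i| = ∑ i ∈ s, f i + ∑ i ∈ s, g i - 2 * ∑ i ∈ s, min (f i) (g i) := by
  simp only [abs_sub_eq_add_sub_two_mul_min, Finset.sum_sub_distrib, Finset.sum_add_distrib,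
    Finset.mul_sum]

theorem Real.min_le_sqrt_mul (a b : ℝ) : min a b ≤ √(a * b) := by
  rcases lt_or_ge (min a b) 0 with hneg | hnonneg
  · exact hneg.le.trans (Real.sqrt_nonneg _)
  have ha : 0 ≤ a := hnonneg.trans (min_le_left a b)
  have hb : 0 ≤ b := hnonneg.trans (min_le_right a b)
  rw [Real.le_sqrt hnonneg (mul_nonneg ha hb), sq]
  exact mul_le_mul (min_le_left a b) (min_le_right a b) hnonneg ha

theorem Real.min_eq_sqrt_mul_iff {a b : ℝ} (ha : 0 ≤ a) (hb : 0 ≤ b) :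
    min a b = √(a * b) ↔ a = b ∨ a = 0 ∨ b = 0 := by
  wlog hab : a ≤ b generalizing a b
  · rw [min_comm, mul_comm, this hb ha (le_of_not_ge hab)]
    tauto
  rw [min_eq_left hab, eq_comm, Real.sqrt_eq_iff_mul_self_eq (mul_nonneg ha hb) ha,
    mul_eq_mul_left_iff]
  constructor
  · rintro (rfl | rfl) <;> simp
  · rintro (rfl | rfl | rfl)
    · exact Or.inl rfl
    · exact Or.inr rfl
    · exact Or.inr (le_antisymm hab ha)

open Finset in
theorem classical_fvdg_lower_eq_iff {X : Type*} [Fintype X] (p q : X → ℝ)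
    (hp : ∀ x, 0 ≤ p x) (hq : ∀ x, 0 ≤ q x)
    (hp1 : ∑ x, p x = 1) (hq1 : ∑ x, q x = 1) :
    1 - ∑ x, Real.sqrt (p x * q x) = (1 / 2) * ∑ x, |p x - q x| ↔
      ∀ x, p x = q x ∨ p x = 0 ∨ q x = 0 := by
  rw [sum_abs_sub_eq_sum_add_sum_sub_two_mul_sum_min, hp1, hq1]
  calc 1 - ∑ x, √(p x * q x) = 1 / 2 * (1 + 1 - 2 * ∑ x, min (p x) (q x))
      ↔ ∑ x, min (p x) (q x) = ∑ x, √(p x * q x) := by constructor <;> intro h <;> linarith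
    _ ↔ ∀ x ∈ univ, min (p x) (q x) = √(p x * q x) :=
      sum_eq_sum_iff_of_le fun x _ ↦ Real.min_le_sqrt_mul (p x) (q x)
    _ ↔ ∀ x, p x = q x ∨ p x = 0 ∨ q x = 0 := by
      simp only [mem_univ, true_imp_iff, Real.min_eq_sqrt_mul_iff (hp _) (hq _)]
end

section
/- For probability distributions p, q on a finite alphabet X, equality T_c(p,q) = √(1 - F_c(p,q)²) holds if and only if p = q, or p(x)·q(x) = 0 for all x, or there exists b ∈ (0,1) such that for every x, q(x) = b·p(x) or q(x) = (1/b)·p(x). -/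
/-!
Put `a = √p` and `c = √q`, unit vectors in `ℓ²` with `F = ∑ a c`. Then `|p - q| = |a - c| (a + c)`,
`∑ (a - c)² = 2 (1 - F)` and `∑ (a + c)² = 2 (1 + F)`, so `T ≤ √(1 - F²)` is the Cauchy–Schwarz
inequality for `|a - c|` and `a + c`. Equality means `|a - c| = μ (a + c)` for some `μ ≥ 0`, which
pointwise says `c = r a` or `a = r c` for the `r ∈ [0, 1]` with `(1 + μ) (1 + r) = 2`. Squaring
gives `q = r² p` or `p = r² q`, and `r² = 1`, `r² = 0`, `r² ∈ (0, 1)` are the three alternatives.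
-/

open Finset

lemma sum_mul_eq_sqrt_mul_sqrt_iff {ι : Type*} [Fintype ι] (u v : ι → ℝ) (hv : v ≠ 0) :
    ∑ i, u i * v i = √(∑ i, u i ^ 2) * √(∑ i, v i ^ 2) ↔ ∃ μ : ℝ, 0 ≤ μ ∧ u = μ • v := by
  set x : EuclideanSpace ℝ ι := WithLp.toLp 2 u
  set y : EuclideanSpace ℝ ι := WithLp.toLp 2 v
  have hinner : inner ℝ x y = ∑ i, u i * v i := by simp [x, y, PiLp.inner_apply, mul_comm]
  have hx : ‖x‖ = √(∑ i, u i ^ 2) := by simp [x, EuclideanSpace.norm_eq]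
  have hy : ‖y‖ = √(∑ i, v i ^ 2) := by simp [y, EuclideanSpace.norm_eq]
  have hy0 : ‖y‖ ≠ 0 := by simpa [y] using hv
  rw [← hinner, ← hx, ← hy, inner_eq_norm_mul_iff_real]
  constructor
  · intro h
    refine ⟨‖x‖ / ‖y‖, by positivity, funext fun i => ?_⟩
    have hi := congrArg (fun z : EuclideanSpace ℝ ι => z i) h
    simp only [PiLp.smul_apply, smul_eq_mul, x, y] at hi
    simp only [Pi.smul_apply, smul_eq_mul]
    field_simp
    linarith
  · rintro ⟨μ, hμ, rfl⟩
    simp [x, y, norm_smul, abs_of_nonneg hμ, smul_smul, mul_comm]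

lemma sqrt_sum_sub_sq_mul_sqrt_sum_add_sq {X : Type*} [Fintype X] {a c : X → ℝ}
    (ha1 : ∑ x, a x ^ 2 = 1) (hc1 : ∑ x, c x ^ 2 = 1) :
    √(∑ x, |a x - c x| ^ 2) * √(∑ x, (a x + c x) ^ 2) = 2 * √(1 - (∑ x, a x * c x) ^ 2) := by
  set F := ∑ x, a x * c x
  have hsub : ∑ x, |a x - c x| ^ 2 = 2 * (1 - F) := by
    simp only [sq_abs, sub_sq, sum_add_distrib, sum_sub_distrib, mul_assoc, ← mul_sum, ha1, hc1, F]
    ring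
  have hadd : ∑ x, (a x + c x) ^ 2 = 2 * (1 + F) := by
    simp only [add_sq, sum_add_distrib, mul_assoc, ← mul_sum, ha1, hc1, F]
    ring
  rw [← Real.sqrt_mul (sum_nonneg fun x _ => sq_nonneg _), hsub, hadd,
    show 2 * (1 - F) * (2 * (1 + F)) = 2 ^ 2 * (1 - F ^ 2) by ring,
    Real.sqrt_mul (by norm_num), Real.sqrt_sq (by norm_num)]

lemma abs_sub_eq_mul_add_iff {μ r a c : ℝ} (hμ : 0 ≤ μ) (hr : 0 ≤ r)
    (hμr : (1 + μ) * (1 + r) = 2) (ha : 0 ≤ a) (hc : 0 ≤ c) :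
    |a - c| = μ * (a + c) ↔ c = r * a ∨ a = r * c := by
  wlog hca : c ≤ a generalizing a c
  · rw [abs_sub_comm, add_comm, or_comm]
    exact this hc ha (le_of_not_ge hca)
  rw [abs_of_nonneg (sub_nonneg.2 hca)]
  constructor
  · intro h
    left
    refine mul_left_cancel₀ (by positivity : 1 + μ ≠ 0) ?_
    linear_combination -h - a * hμr
  · rintro (h | h)
    · subst h; linear_combination (-a) * hμr
    · subst h
      have h1 : 0 ≤ c * (1 - r) := by
        rw [show c * (1 - r) = c * μ * (1 + r) by linear_combination -c * hμr]
        positivity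
      have hcr : c * (r - 1) = 0 := by nlinarith
      linear_combination 2 * hcr - c * hμr

lemma exists_mem_Icc_one_add_mul_one_add_eq_two {μ : ℝ} (h0 : 0 ≤ μ) (h1 : μ ≤ 1) :
    ∃ r ∈ Set.Icc (0 : ℝ) 1, (1 + μ) * (1 + r) = 2 :=
  ⟨(1 - μ) / (1 + μ), ⟨by bound, by rw [div_le_one (by positivity)]; linarith⟩, by
    field_simp; ring⟩

lemma exists_abs_sub_eq_smul_add_iff {X : Type*} {a c : X → ℝ} (ha : ∀ x, 0 ≤ a x)
    (hc : ∀ x, 0 ≤ c x) :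
    (∃ μ : ℝ, 0 ≤ μ ∧ |a - c| = μ • (a + c)) ↔
      ∃ r ∈ Set.Icc (0 : ℝ) 1, ∀ x, c x = r * a x ∨ a x = r * c x := by
  constructor
  · rintro ⟨μ, hμ0, hμ⟩
    have hμx (x : X) : |a x - c x| = μ * (a x + c x) := congrFun hμ x
    by_cases hμ1 : μ ≤ 1
    · obtain ⟨r, hr, hμr⟩ := exists_mem_Icc_one_add_mul_one_add_eq_two hμ0 hμ1
      exact ⟨r, hr, fun x => (abs_sub_eq_mul_add_iff hμ0 hr.1 hμr (ha x) (hc x)).1 (hμx x)⟩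
    -- `|a - c| ≤ a + c`, so a factor `μ > 1` forces `a x = c x = 0`.
    refine ⟨0, ⟨le_rfl, zero_le_one⟩, fun x => Or.inl ?_⟩
    have hle : μ * (a x + c x) ≤ 1 * (a x + c x) := by
      rw [← hμx, one_mul]
      exact abs_sub_le_iff.2 ⟨by linarith [hc x], by linarith [ha x]⟩
    have hac : a x + c x ≤ 0 := not_lt.1 fun h => hμ1 (le_of_mul_le_mul_right hle h)
    linarith [ha x, hc x]
  · rintro ⟨r, ⟨hr0, hr1⟩, hr⟩
    obtain ⟨μ, ⟨hμ0, -⟩, hμr⟩ := exists_mem_Icc_one_add_mul_one_add_eq_two hr0 hr1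
    refine ⟨μ, hμ0, funext fun x => ?_⟩
    exact (abs_sub_eq_mul_add_iff hμ0 hr0 (by linear_combination hμr) (ha x) (hc x)).2 (hr x)

theorem half_sum_abs_sq_sub_sq_eq_sqrt_iff {X : Type*} [Fintype X] {a c : X → ℝ}
    (ha : ∀ x, 0 ≤ a x) (hc : ∀ x, 0 ≤ c x) (ha1 : ∑ x, a x ^ 2 = 1) (hc1 : ∑ x, c x ^ 2 = 1) :
    1 / 2 * ∑ x, |a x ^ 2 - c x ^ 2| = √(1 - (∑ x, a x * c x) ^ 2) ↔
      ∃ r ∈ Set.Icc (0 : ℝ) 1, ∀ x, c x = r * a x ∨ a x = r * c x := by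
  have habs (x : X) : |a x ^ 2 - c x ^ 2| = |a x - c x| * (a x + c x) := by
    rw [sq_sub_sq, abs_mul, abs_of_nonneg (add_nonneg (ha x) (hc x)), mul_comm]
  have hac : a + c ≠ 0 := fun h => by
    have ha0 (x : X) : a x = 0 := by
      have hx : a x + c x = 0 := congrFun h x
      linarith [ha x, hc x]
    simp [ha0] at ha1
  rw [sum_congr rfl fun x _ => habs x]
  calc _ ↔ ∑ x, |a x - c x| * (a x + c x) =
        √(∑ x, |a x - c x| ^ 2) * √(∑ x, (a x + c x) ^ 2) := by
        rw [sqrt_sum_sub_sq_mul_sqrt_sum_add_sq ha1 hc1]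
        constructor <;> intro h <;> linarith
    _ ↔ ∃ μ : ℝ, 0 ≤ μ ∧ |a - c| = μ • (a + c) := sum_mul_eq_sqrt_mul_sqrt_iff _ _ hac
    _ ↔ _ := exists_abs_sub_eq_smul_add_iff ha hc

lemma sqrt_eq_mul_sqrt_iff {r p q : ℝ} (hr : 0 ≤ r) (hp : 0 ≤ p) (hq : 0 ≤ q) :
    √q = r * √p ↔ q = r ^ 2 * p := by
  rw [← Real.sqrt_inj hq (by positivity), Real.sqrt_mul (sq_nonneg r), Real.sqrt_sq hr]

lemma exists_sqrt_eq_mul_sqrt_iff {X : Type*} {p q : X → ℝ} (hp : ∀ x, 0 ≤ p x)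
    (hq : ∀ x, 0 ≤ q x) :
    (∃ r ∈ Set.Icc (0 : ℝ) 1, ∀ x, √(q x) = r * √(p x) ∨ √(p x) = r * √(q x)) ↔
      ∃ b ∈ Set.Icc (0 : ℝ) 1, ∀ x, q x = b * p x ∨ p x = b * q x := by
  constructor
  · rintro ⟨r, ⟨hr0, hr1⟩, h⟩
    refine ⟨r ^ 2, ⟨by positivity, pow_le_one₀ hr0 hr1⟩, fun x => ?_⟩
    rw [← sqrt_eq_mul_sqrt_iff hr0 (hp x) (hq x), ← sqrt_eq_mul_sqrt_iff hr0 (hq x) (hp x)]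
    exact h x
  · rintro ⟨b, ⟨hb0, hb1⟩, h⟩
    refine ⟨√b, ⟨Real.sqrt_nonneg b, Real.sqrt_le_one.2 hb1⟩, fun x => ?_⟩
    have hsq : √b ^ 2 = b := Real.sq_sqrt hb0
    rw [sqrt_eq_mul_sqrt_iff (Real.sqrt_nonneg b) (hp x) (hq x),
      sqrt_eq_mul_sqrt_iff (Real.sqrt_nonneg b) (hq x) (hp x), hsq]
    exact h x

lemma exists_eq_mul_or_eq_mul_iff {X : Type*} (p q : X → ℝ) :
    (∃ b ∈ Set.Icc (0 : ℝ) 1, ∀ x, q x = b * p x ∨ p x = b * q x) ↔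
      p = q ∨ (∀ x, p x * q x = 0) ∨
        ∃ b ∈ Set.Ioo (0 : ℝ) 1, ∀ x, q x = b * p x ∨ q x = (1 / b) * p x := by
  constructor
  · rintro ⟨b, ⟨hb0, hb1⟩, h⟩
    rcases hb0.eq_or_lt with rfl | hb0
    · exact Or.inr <| Or.inl fun x => by rcases h x with h | h <;> simp [h]
    rcases hb1.eq_or_lt with rfl | hb1
    · exact Or.inl <| funext fun x => by rcases h x with h | h <;> linarith
    refine Or.inr <| Or.inr ⟨b, ⟨hb0, hb1⟩, fun x => (h x).imp_right fun h => ?_⟩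
    rw [h]; field_simp
  · rintro (rfl | h | ⟨b, ⟨hb0, hb1⟩, h⟩)
    · exact ⟨1, ⟨zero_le_one, le_rfl⟩, fun x => by simp⟩
    · refine ⟨0, ⟨le_rfl, zero_le_one⟩, fun x => ?_⟩
      rcases mul_eq_zero.1 (h x) with h | h <;> simp [h]
    · refine ⟨b, ⟨hb0.le, hb1.le⟩, fun x => (h x).imp_right fun h => ?_⟩
      rw [h]; field_simp

open Finset in
theorem classical_fvdg_upper_eq_iff {X : Type*} [Fintype X] (p q : X → ℝ)
    (hp : ∀ x, 0 ≤ p x) (hq : ∀ x, 0 ≤ q x)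
    (hp1 : ∑ x, p x = 1) (hq1 : ∑ x, q x = 1) :
    (1 / 2) * ∑ x, |p x - q x| =
      Real.sqrt (1 - (∑ x, Real.sqrt (p x * q x)) ^ 2) ↔
      p = q ∨ (∀ x, p x * q x = 0) ∨
        ∃ b ∈ Set.Ioo (0 : ℝ) 1, ∀ x, q x = b * p x ∨ q x = (1 / b) * p x := by
  have key := half_sum_abs_sq_sub_sq_eq_sqrt_iff (a := fun x => √(p x)) (c := fun x => √(q x))
    (fun x => Real.sqrt_nonneg _) (fun x => Real.sqrt_nonneg _)
    (by simp [Real.sq_sqrt, hp, hp1]) (by simp [Real.sq_sqrt, hq, hq1])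
  simp only [Real.sq_sqrt, hp, hq, ← Real.sqrt_mul] at key
  rw [key, exists_sqrt_eq_mul_sqrt_iff hp hq, exists_eq_mul_or_eq_mul_iff]
end

section
/- The equation (ln x)² = 2(ln x/x)(x − 1) for x ≥ 1 has exactly two solutions: x = 1 and x = exp(W₀(−2/e) + 2), where W₀ is the principal branch of the Lambert W function. -/
/-! With `f x = x log x - 2 (x - 1)`, the equation on `(1, ∞)` is `log x · f x = 0`, i.e. `f x = 0`.
Since `f` is strictly convex it takes the value `0` at most twice, and it does so at `1` and `x₀`. -/

open Real Set

section StrictConvexOn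

variable {𝕜 β : Type*} [Field 𝕜] [LinearOrder 𝕜] [IsStrictOrderedRing 𝕜]
  [AddCommMonoid β] [LinearOrder β] [IsOrderedAddMonoid β] [Module 𝕜 β] [PosSMulStrictMono 𝕜 β]
  {s : Set 𝕜} {f : 𝕜 → β} {a b c : 𝕜}

theorem StrictConvexOn.lt_max_of_mem_Ioo (hf : StrictConvexOn 𝕜 s f) (ha : a ∈ s) (hc : c ∈ s)
    (hb : b ∈ Ioo a c) : f b < max (f a) (f c) :=
  hf.lt_on_openSegment ha hc (hb.1.trans hb.2).ne <| by rwa [openSegment_eq_Ioo (hb.1.trans hb.2)]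

theorem StrictConvexOn.eq_or_eq_of_apply_eq (hf : StrictConvexOn 𝕜 s f) (ha : a ∈ s)
    (hb : b ∈ s) (hc : c ∈ s) (hac : a < c) (hfa : f a = f c) (hfb : f b = f c) :
    b = a ∨ b = c := by
  by_contra! hne
  obtain hba | hab := hne.1.lt_or_gt
  · have := hf.lt_max_of_mem_Ioo hb hc ⟨hba, hac⟩
    simp [hfa, hfb] at this
  obtain hbc | hcb := hne.2.lt_or_gt
  · have := hf.lt_max_of_mem_Ioo ha hc ⟨hab, hbc⟩
    simp [hfa, hfb] at this
  · have := hf.lt_max_of_mem_Ioo ha hb ⟨hac, hcb⟩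
    simp [hfa, hfb] at this

end StrictConvexOn

theorem strictConvexOn_mul_log_sub_affine (a b : ℝ) :
    StrictConvexOn ℝ (Ici 0) (fun x ↦ x * log x - a * (x - b)) :=
  strictConvexOn_mul_log.sub_concaveOn ⟨convex_Ici 0, fun x _ y _ u v _ _ huv ↦ by
    simp only [smul_eq_mul]
    linear_combination (-(a * b)) * huv⟩

theorem log_sq_eq_mul_log_div_iff {x : ℝ} (hx : 1 < x) :
    log x ^ 2 = 2 * (log x / x) * (x - 1) ↔ x * log x = 2 * (x - 1) := by
  have hlog : log x ≠ 0 := (log_pos hx).ne'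
  have hx0 : x ≠ 0 := by positivity
  rw [mul_comm x, ← mul_right_inj' hlog]
  constructor <;> intro h <;> field_simp at * <;> linarith

/-- The equation `(ln x)² = 2 (ln x / x)(x - 1)` on `[1, ∞)` has exactly the two
solutions `x = 1` and `x = x₀`, where `x₀` is the unique solution greater than `e`
(equal to `exp(W₀(-2/e) + 2)`), characterized by `ln x₀ · x₀ = 2 (x₀ - 1)`. -/
theorem log_sq_eq_tangent_iff (x₀ : ℝ) (hx₀ : Real.exp 1 < x₀)
    (hx₀eq : Real.log x₀ * x₀ = 2 * (x₀ - 1)) :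
    ∀ x : ℝ, 1 ≤ x →
      ((Real.log x) ^ 2 = 2 * (Real.log x / x) * (x - 1) ↔ x = 1 ∨ x = x₀) := by
  have hx₀1 : 1 < x₀ := (one_lt_exp_iff.2 one_pos).trans hx₀
  intro x hx
  obtain rfl | hx1 := hx.eq_or_lt
  · simp
  rw [log_sq_eq_mul_log_div_iff hx1]
  have hf := strictConvexOn_mul_log_sub_affine 2 1
  constructor
  · intro h
    have mem : ∀ {y : ℝ}, 1 ≤ y → y ∈ Ici 0 := fun hy ↦ zero_le_one.trans hy
    refine hf.eq_or_eq_of_apply_eq (mem le_rfl) (mem hx) (mem hx₀1.le) hx₀1 ?_ ?_ <;>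
      norm_num <;> linarith
  · rintro (rfl | rfl)
    · exact absurd hx1 (lt_irrefl 1)
    · linarith
end

section
/- Let v ∈ ℝ^d be a unit vector indexed by pairs (j,k) with j ∈ {1,...,d_A}, k ∈ {1,...,d_B}, with all components nonzero aggregates in the sense that for each term v_{jk}² > 0 one has ∑_l v_{lk}² > 0. Then 2·√(∑_{k,j} v_{jk}² · (ln((∑_l v_{lk}²)/v_{jk}²))²) ≤ 2·√(f(d_A)), where f is the increasing concave upper bound of (ln x)² on [1,∞) given by f(x) = 2(ln x₀/x₀)(x−1) for x ∈ [1,x₀] and f(x) = (ln x)² for x ≥ x₀, with x₀ > e satisfying (ln x₀)x₀ = 2(x₀−1). -/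
/-- The piecewise upper bound for `(ln x)²` on `[1, ∞)`:
linear on `[1, x₀]` and equal to `(ln x)²` beyond `x₀`. -/
noncomputable def fbound (x₀ x : ℝ) : ℝ :=
  if x ≤ x₀ then 2 * (Real.log x₀ / x₀) * (x - 1) else (Real.log x) ^ 2

/-!
Put `m = max x₀ d_A`. The tangent line of `(log t)²` at `m` lies above `(log t)²` on all of
`[1, ∞)`: on `[e, ∞)` because `(log t)²` is concave there, and on `[1, e]`, where `(log t)²` is
convex, because the tangent lies above it at both ends, at `t = 1` by the defining equation of
`x₀`. Evaluating this bound at `t = S_k / v_{jk}²`, where `S_k = ∑_l v_{lk}²`, and averaging with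
the weights `v_{jk}²` gives the value of the tangent line at `d_A`, which is `f(d_A)`.
-/

open Real Set Finset

theorem ConcaveOn.le_add_mul_sub_of_hasDerivAt {S : Set ℝ} {f : ℝ → ℝ} {f' x y : ℝ}
    (hf : ConcaveOn ℝ S f) (hx : x ∈ S) (hy : y ∈ S) (hf' : HasDerivAt f f' x) :
    f y ≤ f x + f' * (y - x) := by
  rcases lt_trichotomy x y with hxy | rfl | hyx
  · have := hf.slope_le_of_hasDerivAt hx hy hxy hf'
    rw [slope_def_field, div_le_iff₀ (sub_pos.2 hxy)] at this
    linarith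
  · simp
  · have := hf.le_slope_of_hasDerivAt hy hx hyx hf'
    rw [slope_def_field, le_div_iff₀ (sub_pos.2 hyx)] at this
    linarith

theorem ConvexOn.le_affine_of_mem_Icc {f : ℝ → ℝ} {a b c d t : ℝ}
    (hf : ConvexOn ℝ (Icc a b) f) (ha : f a ≤ c * a + d) (hb : f b ≤ c * b + d)
    (ht : t ∈ Icc a b) : f t ≤ c * t + d := by
  have hab : a ≤ b := ht.1.trans ht.2
  have hline : ConcaveOn ℝ (Icc a b) fun s => c * s + d :=
    ((LinearMap.concaveOn (c • LinearMap.id : ℝ →ₗ[ℝ] ℝ) (convex_Icc a b)).add_const d).congr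
      fun s _ => by simp
  have := (hf.sub hline).le_max_of_mem_Icc (left_mem_Icc.2 hab) (right_mem_Icc.2 hab) ht
  simp only [Pi.sub_apply] at this
  linarith [max_le (sub_nonpos.2 ha) (sub_nonpos.2 hb)]

namespace Real

theorem hasDerivAt_log_sq {x : ℝ} (hx : x ≠ 0) :
    HasDerivAt (fun t => log t ^ 2) (2 * log x / x) x := by
  refine ((hasDerivAt_log hx).fun_pow 2).congr_deriv ?_
  norm_num [div_eq_mul_inv]

theorem concaveOn_log_sq : ConcaveOn ℝ (Ici (exp 1)) fun x => log x ^ 2 := by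
  have hderiv : ∀ x ∈ Ici (exp 1), HasDerivAt (fun t => log t ^ 2) (2 * log x / x) x :=
    fun x hx => hasDerivAt_log_sq ((exp_pos 1).trans_le hx).ne'
  refine AntitoneOn.concaveOn_of_deriv (convex_Ici _)
    (fun x hx => (hderiv x hx).continuousAt.continuousWithinAt)
    (fun x hx => (hderiv x (interior_subset hx)).differentiableAt.differentiableWithinAt) ?_
  intro x hx y hy hxy
  rw [(hderiv x (interior_subset hx)).deriv, (hderiv y (interior_subset hy)).deriv,
    mul_div_assoc, mul_div_assoc]
  exact mul_le_mul_of_nonneg_left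
    (log_div_self_antitoneOn (interior_subset hx) (interior_subset hy) hxy) zero_le_two

theorem convexOn_log_sq : ConvexOn ℝ (Ioc 0 (exp 1)) fun x => log x ^ 2 := by
  refine convexOn_of_hasDerivWithinAt2_nonneg (convex_Ioc _ _)
    (f' := fun x => 2 * log x / x) (f'' := fun x => 2 * (1 - log x) / x ^ 2) ?_ ?_ ?_ ?_
  · exact fun x hx => (hasDerivAt_log_sq hx.1.ne').continuousAt.continuousWithinAt
  · intro x hx
    rw [interior_Ioc] at hx
    exact (hasDerivAt_log_sq hx.1.ne').hasDerivWithinAt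
  · intro x hx
    rw [interior_Ioc] at hx
    have := ((hasDerivAt_log hx.1.ne').const_mul 2).div (hasDerivAt_id x) hx.1.ne'
    refine (this.congr_deriv ?_).hasDerivWithinAt
    simp only [id]
    field_simp
    rw [div_self hx.1.ne']
  · intro x hx
    rw [interior_Ioc] at hx
    have : log x ≤ 1 := by
      rw [← log_exp 1]
      exact log_le_log hx.1 hx.2.le
    exact div_nonneg (by linarith) (sq_nonneg x)

/-- `2 (m - 1) ≤ m log m` says that the tangent of `(log t)²` at `m` is nonnegative at `t = 1`. -/
theorem two_mul_sub_one_le_mul_log {x₀ m : ℝ} (hx₀ : 2 ≤ x₀)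
    (hx₀m : 2 * (x₀ - 1) ≤ x₀ * log x₀) (hm : x₀ ≤ m) : 2 * (m - 1) ≤ m * log m := by
  have hx₀pos : 0 < x₀ := by linarith
  have hmpos : 0 < m := by linarith
  have hlog : log x₀ - log m ≤ x₀ / m - 1 := by
    rw [← log_div hx₀pos.ne' hmpos.ne']
    exact log_le_sub_one_of_pos (div_pos hx₀pos hmpos)
  have hlog' : m * log x₀ - m * log m ≤ x₀ - m := by
    have := mul_le_mul_of_nonneg_left hlog hmpos.le
    rwa [mul_sub, mul_sub, mul_div_cancel₀ _ hmpos.ne', mul_one] at this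
  nlinarith [mul_nonneg (sub_nonneg.2 hx₀) (sub_nonneg.2 hm),
    mul_le_mul_of_nonneg_left hlog' hx₀pos.le, mul_le_mul_of_nonneg_left hx₀m hmpos.le]

theorem log_sq_le_tangent {m t : ℝ} (hm : exp 1 ≤ m) (hm1 : 2 * (m - 1) ≤ m * log m)
    (ht : 1 ≤ t) : log t ^ 2 ≤ log m ^ 2 + 2 * log m / m * (t - m) := by
  have hm0 : 0 < m := (exp_pos 1).trans_le hm
  have tangent_above : ∀ s, exp 1 ≤ s → log s ^ 2 ≤ log m ^ 2 + 2 * log m / m * (s - m) :=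
    fun s hs => concaveOn_log_sq.le_add_mul_sub_of_hasDerivAt hm hs (hasDerivAt_log_sq hm0.ne')
  rcases le_total (exp 1) t with het | hte
  · exact tangent_above t het
  have hconvex : ConvexOn ℝ (Icc 1 (exp 1)) fun x => log x ^ 2 :=
    convexOn_log_sq.subset (fun x hx => ⟨one_pos.trans_le hx.1, hx.2⟩) (convex_Icc _ _)
  have hat_one : log 1 ^ 2 ≤ 2 * log m / m * 1 + (log m ^ 2 - 2 * log m / m * m) := by
    have hlogm : 0 ≤ log m := log_nonneg ((one_le_exp zero_le_one).trans hm)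
    calc log 1 ^ 2 = 0 := by simp
      _ ≤ log m / m * (m * log m - 2 * (m - 1)) :=
        mul_nonneg (div_nonneg hlogm hm0.le) (by linarith)
      _ = _ := by field_simp; ring
  have := hconvex.le_affine_of_mem_Icc hat_one (by linarith [tangent_above _ le_rfl]) ⟨ht, hte⟩
  linarith

end Real

theorem sum_mul_le_of_le_affine {ι : Type*} [Fintype ι] {w : ι → ℝ} (hw : ∀ j, 0 < w j)
    {φ : ℝ → ℝ} {a b c : ℝ} (hφ : ∀ t, 1 ≤ t → φ t ≤ a + c * (t - b)) :
    ∑ j, w j * φ ((∑ l, w l) / w j) ≤ (a + c * (Fintype.card ι - b)) * ∑ j, w j := by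
  have hterm : ∀ j, w j * φ ((∑ l, w l) / w j) ≤ (a - c * b) * w j + c * ∑ l, w l := by
    intro j
    have hle : w j ≤ ∑ l, w l := single_le_sum (fun l _ => (hw l).le) (mem_univ j)
    calc w j * φ ((∑ l, w l) / w j)
        ≤ w j * (a + c * ((∑ l, w l) / w j - b)) :=
          mul_le_mul_of_nonneg_left (hφ _ ((one_le_div (hw j)).2 hle)) (hw j).le
      _ = (a - c * b) * w j + c * ∑ l, w l := by field_simp [(hw j).ne']; ring
  calc ∑ j, w j * φ ((∑ l, w l) / w j)
      ≤ ∑ j, ((a - c * b) * w j + c * ∑ l, w l) := sum_le_sum fun j _ => hterm j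
    _ = (a + c * (Fintype.card ι - b)) * ∑ j, w j := by
      rw [sum_add_distrib, ← mul_sum, sum_const, card_univ, nsmul_eq_mul]
      ring

theorem fbound_eq_tangent {x₀ : ℝ} (hx₀ : 0 < x₀) (hx₀eq : log x₀ * x₀ = 2 * (x₀ - 1)) (d : ℝ) :
    fbound x₀ d = log (max x₀ d) ^ 2 + 2 * log (max x₀ d) / max x₀ d * (d - max x₀ d) := by
  unfold fbound
  split_ifs with hd
  · rw [max_eq_left hd]
    field_simp
    linear_combination (-log x₀) * hx₀eq
  · rw [max_eq_right (not_le.1 hd).le]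
    ring

theorem derivative_bound_general (dA dB : ℕ)
    (x₀ : ℝ) (hx₀ : Real.exp 1 < x₀)
    (hx₀eq : Real.log x₀ * x₀ = 2 * (x₀ - 1))
    (v : Fin dB → Fin dA → ℝ)
    (hpos : ∀ k j, 0 < (v k j) ^ 2)
    (hnorm : ∑ k, ∑ j, (v k j) ^ 2 = 1) :
    2 * Real.sqrt (∑ k, ∑ j,
        (v k j) ^ 2 * (Real.log ((∑ l, (v k l) ^ 2) / (v k j) ^ 2)) ^ 2) ≤
      2 * Real.sqrt (fbound x₀ (dA : ℝ)) := by
  have hx₀2 : 2 ≤ x₀ := by linarith [add_one_le_exp (1 : ℝ)]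
  set m := max x₀ (dA : ℝ)
  have hm : exp 1 ≤ m := hx₀.le.trans (le_max_left _ _)
  have hm1 : 2 * (m - 1) ≤ m * log m :=
    two_mul_sub_one_le_mul_log hx₀2 (by linarith) (le_max_left _ _)
  have hrow : ∀ k, ∑ j, v k j ^ 2 * log ((∑ l, v k l ^ 2) / v k j ^ 2) ^ 2
      ≤ fbound x₀ dA * ∑ j, v k j ^ 2 := fun k => by
    rw [fbound_eq_tangent (by linarith) hx₀eq]
    simpa using sum_mul_le_of_le_affine (hpos k) fun t ht => log_sq_le_tangent hm hm1 ht
  have hsum : ∑ k, ∑ j, v k j ^ 2 * log ((∑ l, v k l ^ 2) / v k j ^ 2) ^ 2 ≤ fbound x₀ dA :=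
    calc _ ≤ ∑ k, fbound x₀ dA * ∑ j, v k j ^ 2 := sum_le_sum fun k _ => hrow k
      _ = fbound x₀ dA := by rw [← mul_sum, hnorm, mul_one]
  gcongr

theorem derivative_bound (dA dB : ℕ) (hdA : 1 ≤ dA)
    (x₀ : ℝ) (hx₀ : Real.exp 1 < x₀)
    (hx₀eq : Real.log x₀ * x₀ = 2 * (x₀ - 1))
    (v : Fin dB → Fin dA → ℝ)
    (hpos : ∀ k j, 0 < (v k j) ^ 2)
    (hnorm : ∑ k, ∑ j, (v k j) ^ 2 = 1) :
    2 * Real.sqrt (∑ k, ∑ j,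
        (v k j) ^ 2 * (Real.log ((∑ l, (v k l) ^ 2) / (v k j) ^ 2)) ^ 2) ≤
      2 * Real.sqrt (fbound x₀ (dA : ℝ)) :=
  derivative_bound_general dA dB x₀ hx₀ hx₀eq v hpos hnorm
end

section
/- Let ρ, σ be invertible density operators on a finite-dimensional complex Hilbert space and suppose 1 − F(ρ,σ) = T(ρ,σ), where F(ρ,σ) = ‖√ρ·√σ‖₁ and T(ρ,σ) = (1/2)‖ρ−σ‖₁. Then ρ = σ. -/
/-!
Put `a = √ρ` and `b = √σ`. Since `tr a² = tr b² = 1` and `Re tr (ab) ≤ ‖ab‖₁ = F`, we have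
`tr (a - b)² = 2 - 2 Re tr (ab) ≥ 2 (1 - F)`, so saturation forces `tr (a - b)² ≥ ‖a² - b²‖₁`.
On the other hand, let `v` be a unit eigenvector of `a - b` with eigenvalue `μ`. From
`a² - b² = (a - b) a + b (a - b)` we get `⟪v, (a² - b²) v⟫ = μ (⟪v, a v⟫ + ⟪v, b v⟫)`, while
`μ = ⟪v, a v⟫ - ⟪v, b v⟫` with both terms positive; hence
`μ² ≤ |⟪v, (a² - b²) v⟫| ≤ ⟪v, |a² - b²| v⟫`, strictly when `μ ≠ 0`. Summing over an eigenbasis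
gives `tr (a - b)² < ‖a² - b²‖₁` unless `a = b`.
-/

open Matrix
open scoped ComplexOrder

/-- The positive semidefinite square root of a positive semidefinite matrix
(as defined in Mathlib of December 2024, since removed). -/
noncomputable def Matrix.PosSemidef.sqrt {n 𝕜 : Type*} [Fintype n] [RCLike 𝕜] [DecidableEq n]
    {A : Matrix n n 𝕜} (hA : A.PosSemidef) : Matrix n n 𝕜 :=
  hA.1.eigenvectorUnitary.1 * diagonal ((↑) ∘ (√·) ∘ hA.1.eigenvalues) *
    (star hA.1.eigenvectorUnitary : Matrix n n 𝕜)

/-- The trace norm of a (square complex) matrix: `‖A‖₁ = tr √(Aᴴ A)`. -/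
noncomputable def traceNorm {n : ℕ} (A : Matrix (Fin n) (Fin n) ℂ) : ℝ :=
  ((Matrix.posSemidef_conjTranspose_mul_self A).sqrt).trace.re


open scoped MatrixOrder

namespace Matrix

variable {n 𝕜 : Type*} [Fintype n] [RCLike 𝕜]

lemma trace_sub_mul_sub {R : Type*} [CommRing R] (a b : Matrix n n R) :
    ((a - b) * (a - b)).trace = (a * a).trace + (b * b).trace - 2 * (a * b).trace := by
  rw [sub_mul, mul_sub, mul_sub, trace_sub, trace_sub, trace_sub, trace_mul_comm b a]
  ring

lemma star_mulVec_dotProduct_mulVec (A : Matrix n n 𝕜) (v w : n → 𝕜) :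
    star (A *ᵥ v) ⬝ᵥ (A *ᵥ w) = star v ⬝ᵥ ((Aᴴ * A) *ᵥ w) := by
  rw [star_mulVec, ← dotProduct_mulVec, mulVec_mulVec]

lemma re_dotProduct_mulVec_le_of_mulVec_eq_smul {A S : Matrix n n 𝕜} (hAS : Aᴴ * A = S * S)
    {v : n → 𝕜} (hv : star v ⬝ᵥ v = 1) {s : ℝ} (hs : 0 ≤ s) (hSv : S *ᵥ v = s • v) :
    RCLike.re (star v ⬝ᵥ (A *ᵥ v)) ≤ s := by
  have hnorm : ‖WithLp.toLp 2 (A *ᵥ v)‖ ^ 2 = s ^ 2 := by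
    rw [@norm_sq_eq_re_inner 𝕜, EuclideanSpace.inner_toLp_toLp, dotProduct_comm,
      star_mulVec_dotProduct_mulVec, hAS, ← mulVec_mulVec, hSv, mulVec_smul, hSv, smul_smul,
      dotProduct_smul, hv]
    simp [sq, RCLike.smul_re]
  have hunit : ‖WithLp.toLp 2 v‖ = 1 := by
    rw [← pow_left_inj₀ (norm_nonneg _) zero_le_one two_ne_zero, @norm_sq_eq_re_inner 𝕜,
      EuclideanSpace.inner_toLp_toLp, dotProduct_comm, hv, RCLike.one_re, one_pow]
  calc RCLike.re (star v ⬝ᵥ (A *ᵥ v))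
      ≤ ‖inner 𝕜 (WithLp.toLp 2 v) (WithLp.toLp 2 (A *ᵥ v))‖ := by
        rw [EuclideanSpace.inner_toLp_toLp, dotProduct_comm]; exact RCLike.re_le_norm _
    _ ≤ ‖WithLp.toLp 2 v‖ * ‖WithLp.toLp 2 (A *ᵥ v)‖ := norm_inner_le_norm _ _
    _ = s := by rw [hunit, one_mul, ← pow_left_inj₀ (norm_nonneg _) hs two_ne_zero, hnorm]

lemma _root_.OrthonormalBasis.star_dotProduct_self
    (b : OrthonormalBasis n 𝕜 (EuclideanSpace 𝕜 n)) (i : n) :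
    star ⇑(b i) ⬝ᵥ ⇑(b i) = 1 := by
  rw [dotProduct_comm, ← EuclideanSpace.inner_eq_star_dotProduct, b.inner_eq_one]

variable [DecidableEq n]

lemma PosSemidef.sqrt_eq_cfcSqrt {A : Matrix n n 𝕜} (hA : A.PosSemidef) :
    hA.sqrt = CFC.sqrt A := by
  rw [CFC.sqrt_eq_real_sqrt A hA.nonneg, cfcₙ_eq_cfc, hA.1.cfc_eq]
  simp only [PosSemidef.sqrt, IsHermitian.cfc, Unitary.conjStarAlgAut_apply]

lemma PosDef.posDef_sqrt {A : Matrix n n 𝕜} (hA : A.PosDef) : hA.posSemidef.sqrt.PosDef := by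
  rw [PosSemidef.sqrt_eq_cfcSqrt]
  exact (IsStrictlyPositive.sqrt A hA.isStrictlyPositive).posDef

lemma PosSemidef.sqrt_mul_self {A : Matrix n n 𝕜} (hA : A.PosSemidef) :
    hA.sqrt * hA.sqrt = A := by
  rw [hA.sqrt_eq_cfcSqrt]
  exact CFC.sqrt_mul_sqrt_self A hA.nonneg

lemma trace_eq_sum_dotProduct (A : Matrix n n 𝕜)
    (b : OrthonormalBasis n 𝕜 (EuclideanSpace 𝕜 n)) :
    A.trace = ∑ i, star ⇑(b i) ⬝ᵥ (A *ᵥ ⇑(b i)) := by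
  rw [← trace_toLin_eq A (PiLp.basisFun 2 𝕜 n), ← toLpLin_eq_toLin,
    LinearMap.trace_eq_sum_inner _ b]
  simp only [toLpLin_apply, EuclideanSpace.inner_eq_star_dotProduct, dotProduct_comm]

lemma re_trace_le_re_trace_cfcAbs (A : Matrix n n 𝕜) :
    RCLike.re A.trace ≤ RCLike.re (CFC.abs A).trace := by
  have hS := (CFC.abs_nonneg A).posSemidef
  rw [trace_eq_sum_dotProduct A hS.1.eigenvectorBasis, hS.1.trace_eq_sum_eigenvalues, map_sum,
    map_sum]
  refine Finset.sum_le_sum fun i _ => ?_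
  rw [RCLike.ofReal_re]
  refine re_dotProduct_mulVec_le_of_mulVec_eq_smul ?_ (OrthonormalBasis.star_dotProduct_self _ i)
    (hS.eigenvalues_nonneg i) (hS.1.mulVec_eigenvectorBasis i)
  rw [CFC.abs_mul_abs, star_eq_conjTranspose]

lemma IsHermitian.abs_re_dotProduct_le_cfcAbs {M : Matrix n n 𝕜} (hM : M.IsHermitian)
    (v : n → 𝕜) :
    |RCLike.re (star v ⬝ᵥ (M *ᵥ v))| ≤ RCLike.re (star v ⬝ᵥ (CFC.abs M *ᵥ v)) := by
  have hsub := (CFC.abs_sub_self M hM.isSelfAdjoint ▸ smul_nonneg zero_le_two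
    (CFC.negPart_nonneg M)).posSemidef.re_dotProduct_nonneg v
  have hadd := (CFC.abs_add_self M hM.isSelfAdjoint ▸ smul_nonneg zero_le_two
    (CFC.posPart_nonneg M)).posSemidef.re_dotProduct_nonneg v
  rw [sub_mulVec, dotProduct_sub, map_sub] at hsub
  rw [add_mulVec, dotProduct_add, map_add] at hadd
  exact abs_le.mpr ⟨by linarith, by linarith⟩

lemma dotProduct_mulVec_mul_self_sub_mul_self {a b : Matrix n n 𝕜} (hherm : (a - b).IsHermitian)
    {v : n → 𝕜} {μ : ℝ} (hv : (a - b) *ᵥ v = μ • v) :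
    star v ⬝ᵥ ((a * a - b * b) *ᵥ v) = μ * star v ⬝ᵥ ((a + b) *ᵥ v) := by
  have hsplit : a * a - b * b = (a - b) * a + b * (a - b) := by noncomm_ring
  have hleft : star v ⬝ᵥ (((a - b) * a) *ᵥ v) = μ * star v ⬝ᵥ (a *ᵥ v) := by
    rw [← mulVec_mulVec, dotProduct_mulVec, ← hherm.eq, ← star_mulVec, hv, star_smul, star_trivial,
      smul_dotProduct, RCLike.real_smul_eq_coe_mul]
  rw [hsplit, add_mulVec, dotProduct_add, hleft, ← mulVec_mulVec, hv, mulVec_smul,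
    dotProduct_smul, RCLike.real_smul_eq_coe_mul, add_mulVec, dotProduct_add, mul_add]

lemma PosDef.sq_lt_re_dotProduct_cfcAbs_mul_self_sub_mul_self {a b : Matrix n n 𝕜}
    (ha : a.PosDef) (hb : b.PosDef) {v : n → 𝕜} (hv : star v ⬝ᵥ v = 1) {μ : ℝ}
    (hμv : (a - b) *ᵥ v = μ • v) (hμ : μ ≠ 0) :
    μ ^ 2 < RCLike.re (star v ⬝ᵥ (CFC.abs (a * a - b * b) *ᵥ v)) := by
  have hv0 : v ≠ 0 := by rintro rfl; simp at hv
  set α := RCLike.re (star v ⬝ᵥ (a *ᵥ v))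
  set β := RCLike.re (star v ⬝ᵥ (b *ᵥ v))
  have hα : 0 < α := ha.re_dotProduct_pos hv0
  have hβ : 0 < β := hb.re_dotProduct_pos hv0
  have hμαβ : μ = α - β := by
    have := congrArg (fun z => RCLike.re (star v ⬝ᵥ z)) hμv
    simp only [sub_mulVec, dotProduct_sub, map_sub, dotProduct_smul, hv] at this
    simpa [RCLike.smul_re] using this.symm
  have hM : RCLike.re (star v ⬝ᵥ ((a * a - b * b) *ᵥ v)) = μ * (α + β) := by
    rw [dotProduct_mulVec_mul_self_sub_mul_self (ha.1.sub hb.1) hμv, RCLike.re_ofReal_mul,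
      add_mulVec, dotProduct_add, map_add]
  have hMherm : (a * a - b * b).IsHermitian := by
    simpa only [sq] using (ha.1.pow 2).sub (hb.1.pow 2)
  have hμlt : |μ| < α + β := by rw [hμαβ, abs_lt]; constructor <;> linarith
  calc μ ^ 2 = |μ| * |μ| := by rw [← sq_abs, sq]
    _ < |μ| * (α + β) := mul_lt_mul_of_pos_left hμlt (abs_pos.mpr hμ)
    _ = |RCLike.re (star v ⬝ᵥ ((a * a - b * b) *ᵥ v))| := by
      rw [hM, abs_mul, abs_of_pos (add_pos hα hβ)]
    _ ≤ _ := hMherm.abs_re_dotProduct_le_cfcAbs v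

theorem PosDef.re_trace_sub_mul_sub_lt_re_trace_cfcAbs {a b : Matrix n n 𝕜} (ha : a.PosDef)
    (hb : b.PosDef) (hab : a ≠ b) :
    RCLike.re ((a - b) * (a - b)).trace < RCLike.re (CFC.abs (a * a - b * b)).trace := by
  have hc : (a - b).IsHermitian := ha.1.sub hb.1
  set v := hc.eigenvectorBasis
  set μ := hc.eigenvalues
  have hsq (i : n) : RCLike.re (star ⇑(v i) ⬝ᵥ (((a - b) * (a - b)) *ᵥ ⇑(v i))) = μ i ^ 2 := by
    rw [← mulVec_mulVec, hc.mulVec_eigenvectorBasis, mulVec_smul, hc.mulVec_eigenvectorBasis,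
      smul_smul, dotProduct_smul, v.star_dotProduct_self]
    simp [μ, sq, RCLike.smul_re]
  obtain ⟨i₀, hi₀⟩ : ∃ i, μ i ≠ 0 := by
    by_contra! h
    exact hab (sub_eq_zero.mp (hc.eigenvalues_eq_zero_iff.mp (funext h)))
  rw [trace_eq_sum_dotProduct _ v, trace_eq_sum_dotProduct _ v, map_sum, map_sum]
  simp only [hsq]
  refine Finset.sum_lt_sum (fun i _ => ?_) ⟨i₀, Finset.mem_univ _,
    ha.sq_lt_re_dotProduct_cfcAbs_mul_self_sub_mul_self hb (v.star_dotProduct_self i₀)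
      (hc.mulVec_eigenvectorBasis i₀) hi₀⟩
  rcases eq_or_ne (μ i) 0 with h | h
  · rw [h, sq, zero_mul]
    exact (CFC.abs_nonneg _).posSemidef.re_dotProduct_nonneg _
  · exact (ha.sq_lt_re_dotProduct_cfcAbs_mul_self_sub_mul_self hb (v.star_dotProduct_self i)
      (hc.mulVec_eigenvectorBasis i) h).le

end Matrix

lemma traceNorm_eq_re_trace_cfcAbs {n : ℕ} (A : Matrix (Fin n) (Fin n) ℂ) :
    traceNorm A = RCLike.re (CFC.abs A).trace := by
  rw [traceNorm, PosSemidef.sqrt_eq_cfcSqrt, CFC.abs, star_eq_conjTranspose]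
  rfl

/-- If invertible density operators saturate the lower Fuchs–van de Graaf
inequality, `1 - F(ρ,σ) = T(ρ,σ)`, then `ρ = σ`. -/
theorem fvdg_lower_saturation_invertible {n : ℕ}
    (ρ σ : Matrix (Fin n) (Fin n) ℂ)
    (hρ : ρ.PosDef) (hσ : σ.PosDef)
    (hρtr : ρ.trace = 1) (hσtr : σ.trace = 1)
    (h : 1 - traceNorm (hρ.posSemidef.sqrt * hσ.posSemidef.sqrt) =
        (1 / 2) * traceNorm (ρ - σ)) :
    ρ = σ := by
  set a := hρ.posSemidef.sqrt
  set b := hσ.posSemidef.sqrt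
  have haa : a * a = ρ := hρ.posSemidef.sqrt_mul_self
  have hbb : b * b = σ := hσ.posSemidef.sqrt_mul_self
  by_contra hne
  have hab : a ≠ b := fun heq => hne (by rw [← haa, ← hbb, heq])
  have hstrict := hρ.posDef_sqrt.re_trace_sub_mul_sub_lt_re_trace_cfcAbs hσ.posDef_sqrt hab
  have hfid := re_trace_le_re_trace_cfcAbs (a * b)
  rw [trace_sub_mul_sub, haa, hbb, hρtr, hσtr, ← traceNorm_eq_re_trace_cfcAbs] at hstrict
  rw [← traceNorm_eq_re_trace_cfcAbs] at hfid
  simp only [map_sub, map_add, RCLike.one_re, RCLike.ofNat_mul_re] at hstrict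
  linarith
end

section
/- Let z₁,...,zₙ ∈ ℂ with |z_x| ≤ 1 for each x, such that ∑_x z_x is real and ∑_x |z_x| − ∑_x z_x ≤ ε for some ε ≥ 0. Then for every x, | |z_x| − z_x | ≤ √(2ε). -/
/-! Writing `d z = ‖z‖ - re z ≥ 0`, one has `‖‖z‖ - z‖² = 2‖z‖ d z ≤ 2 d z` when `‖z‖ ≤ 1`, and each
`d (z x)` is bounded by `∑ y, d (z y) = ∑ y, ‖z y‖ - re (∑ y, z y) ≤ ε`. -/

namespace Complex

theorem norm_ofReal_norm_sub_self_sq (z : ℂ) :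
    ‖((‖z‖ : ℝ) : ℂ) - z‖ ^ 2 = 2 * ‖z‖ * (‖z‖ - z.re) := by
  have hz : ‖z‖ ^ 2 = z.re ^ 2 + z.im ^ 2 := by
    rw [Complex.sq_norm, normSq_apply]; ring
  rw [Complex.sq_norm, normSq_apply]
  simp only [sub_re, sub_im, ofReal_re, ofReal_im]
  linear_combination -hz

theorem norm_ofReal_norm_sub_self_sq_le {z : ℂ} (hz : ‖z‖ ≤ 1) :
    ‖((‖z‖ : ℝ) : ℂ) - z‖ ^ 2 ≤ 2 * (‖z‖ - z.re) := by
  rw [norm_ofReal_norm_sub_self_sq, mul_assoc]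
  gcongr
  calc ‖z‖ * (‖z‖ - z.re) ≤ 1 * (‖z‖ - z.re) := by
        gcongr
        exact sub_nonneg.mpr (re_le_norm z)
    _ = ‖z‖ - z.re := one_mul _

theorem norm_sub_re_le_sum_norm_sub_re_sum {ι : Type*} [Fintype ι] (z : ι → ℂ) (x : ι) :
    ‖z x‖ - (z x).re ≤ ∑ y, ‖z y‖ - (∑ y, z y).re := by
  rw [re_sum, ← Finset.sum_sub_distrib]
  exact Finset.single_le_sum (fun y _ => sub_nonneg.mpr (re_le_norm (z y))) (Finset.mem_univ x)

end Complex

theorem abs_sub_self_le_of_sum_close_general {n : ℕ} (z : Fin n → ℂ) (ε : ℝ)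
    (hz : ∀ x, ‖z x‖ ≤ 1)
    (hclose : ∑ x, ‖z x‖ - (∑ x, z x).re ≤ ε) :
    ∀ x, ‖((‖z x‖ : ℝ) : ℂ) - z x‖ ≤ Real.sqrt (2 * ε) := by
  intro x
  have hsq : ‖((‖z x‖ : ℝ) : ℂ) - z x‖ ^ 2 ≤ 2 * ε :=
    calc ‖((‖z x‖ : ℝ) : ℂ) - z x‖ ^ 2 ≤ 2 * (‖z x‖ - (z x).re) :=
          Complex.norm_ofReal_norm_sub_self_sq_le (hz x)
      _ ≤ 2 * ε := by
          gcongr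
          exact (Complex.norm_sub_re_le_sum_norm_sub_re_sum z x).trans hclose
  simpa only [abs_norm] using Real.abs_le_sqrt hsq

/-- If complex numbers `z x` of modulus at most 1 have a real sum within `ε` of the
sum of their moduli, then each `z x` is within `√(2ε)` of its modulus. -/
theorem abs_sub_self_le_of_sum_close {n : ℕ} (z : Fin n → ℂ) (ε : ℝ)
    (hε : 0 ≤ ε)
    (hz : ∀ x, ‖z x‖ ≤ 1)
    (hreal : (∑ x, z x).im = 0)
    (hclose : ∑ x, ‖z x‖ - (∑ x, z x).re ≤ ε) :
    ∀ x, ‖((‖z x‖ : ℝ) : ℂ) - z x‖ ≤ Real.sqrt (2 * ε) :=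
  abs_sub_self_le_of_sum_close_general z ε hz hclose
end
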